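/- Let R be a commutative unital ring, I an ideal of R, and M an injective R-module. Then there is a short exact sequence 0 → Γ_I(M) → M → D_I(M) → 0; in particular D_I(M) ≅ M/Γ_I(M), where Γ_I(M) = {m ∈ M : I^k m = 0 for some k ≥ 1} and D_I(M) = colim_k Hom_R(I^k, M). -/

import Mathlib

/-!
STATEMENT 5: Let `R` be a commutative unital ring, `I` an ideal of `R`, and `M` an injective
`R`-module. Then there is a short exact sequence `0 → Γ_I(M) → M → D_I(M) → 0`, where
`Γ_I(M) = {m ∈ M : I^k m = 0 for some k ≥ 1}` and `D_I(M) = colim_k Hom_R(I^k, M)`, and the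
map `M → D_I(M)` is induced by the restrictions of `Hom_R(R, M) ≅ M` to the ideals `I^k`.

With `Γ_I(M) → M` the (automatically injective) submodule inclusion, the short exactness is
expressed as: the canonical map `M → D_I(M)` is surjective with kernel `Γ_I(M)`
(so `D_I(M) ≅ M/Γ_I(M)`).
-/

universe u

open Module

/-- The `I`-torsion submodule `Γ_I(M) = {m ∈ M : I^k m = 0 for some k ≥ 1}`. -/
noncomputable def torsionGamma (R : Type u) [CommRing R] (I : Ideal R) (M : Type u)
    [AddCommGroup M] [Module R M] : Submodule R M :=
  ⨆ k : ℕ, Submodule.torsionBySet R M ((I ^ (k + 1) : Ideal R) : Set R)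

/-- The restriction map `M → Hom_R(J, M)`, sending `m` to the restriction of `x ↦ x • m`
to the ideal `J ⊆ R`. -/
noncomputable def restrictionMap (R : Type u) [CommRing R] (M : Type u) [AddCommGroup M]
    [Module R M] (J : Ideal R) : M →ₗ[R] (J →ₗ[R] M) :=
  (LinearMap.domRestrict' J).comp (LinearMap.lsmul R M).flip

/-- The directed system `k ↦ Hom_R(I^(k+1), M)` with the restriction maps induced by
the inclusions `I^(l+1) ⊆ I^(k+1)` for `k ≤ l`. -/
noncomputable def homPowDiagram (R : Type u) [CommRing R] (I : Ideal R) (M : Type u)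
    [AddCommGroup M] [Module R M] :
    ∀ k l : ℕ, k ≤ l → (↥(I ^ (k + 1)) →ₗ[R] M) →ₗ[R] (↥(I ^ (l + 1)) →ₗ[R] M) :=
  fun _ _ h =>
    LinearMap.lcomp R M (Submodule.inclusion (Ideal.pow_le_pow_right (by omega)))

/-- The ideal transform `D_I(M) = colim_{k ≥ 1} Hom_R(I^k, M)`. -/
noncomputable abbrev idealTransform (R : Type u) [CommRing R] (I : Ideal R) (M : Type u)
    [AddCommGroup M] [Module R M] : Type u :=
  Module.DirectLimit (fun k : ℕ => ↥(I ^ (k + 1)) →ₗ[R] M) (homPowDiagram R I M)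

/-- The canonical map `M → D_I(M)` induced by the restrictions of `Hom_R(R, M) ≅ M` to the
ideals `I^k`. -/
noncomputable def toTransform (R : Type u) [CommRing R] (I : Ideal R) (M : Type u)
    [AddCommGroup M] [Module R M] : M →ₗ[R] idealTransform R I M :=
  (Module.DirectLimit.of R ℕ (fun k : ℕ => ↥(I ^ (k + 1)) →ₗ[R] M)
    (homPowDiagram R I M) 0).comp (restrictionMap R M (I ^ (0 + 1)))

/-!
Everything is checked stage by stage. The kernel of `m ↦ (x ↦ x • m)` on `Hom_R(I^k, M)` is the
`I^k`-torsion of `M`, and an element of a direct limit vanishes iff it vanishes at some stage, which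
gives the kernel. For surjectivity, every element of `D_I(M)` comes from some `Hom_R(I^k, M)`, and
Baer's criterion for the injective module `M` says exactly that each `I^k → M` is such a
restriction `x ↦ x • m`.
-/

section Restriction

variable {R : Type u} [CommRing R] {M : Type u} [AddCommGroup M] [Module R M]

@[simp]
theorem restrictionMap_apply (J : Ideal R) (m : M) (x : J) :
    restrictionMap R M J m x = (x : R) • m :=
  rfl

theorem ker_restrictionMap (J : Ideal R) :
    LinearMap.ker (restrictionMap R M J) = Submodule.torsionBySet R M J := by
  ext m
  simp only [LinearMap.mem_ker, Submodule.mem_torsionBySet_iff, LinearMap.ext_iff,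
    restrictionMap_apply, LinearMap.zero_apply]
  rfl

theorem restrictionMap_surjective_of_baer (hM : Module.Baer R M) (J : Ideal R) :
    Function.Surjective (restrictionMap R M J) := by
  intro f
  obtain ⟨g, hg⟩ := hM J f
  refine ⟨g 1, LinearMap.ext fun x => ?_⟩
  rw [restrictionMap_apply, ← map_smul, smul_eq_mul, mul_one, hg x x.2]

end Restriction

section Transform

variable (R : Type u) [CommRing R] (I : Ideal R) (M : Type u) [AddCommGroup M] [Module R M]

instance : DirectedSystem (fun k : ℕ => ↥(I ^ (k + 1)) →ₗ[R] M) (homPowDiagram R I M · · ·) where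
  map_self _ _ := rfl
  map_map _ _ _ _ _ _ := rfl

variable {R M}

theorem homPowDiagram_restrictionMap {k l : ℕ} (h : k ≤ l) (m : M) :
    homPowDiagram R I M k l h (restrictionMap R M (I ^ (k + 1)) m) =
      restrictionMap R M (I ^ (l + 1)) m :=
  rfl

theorem toTransform_eq_of (k : ℕ) (m : M) :
    toTransform R I M m =
      Module.DirectLimit.of R ℕ _ (homPowDiagram R I M) k (restrictionMap R M (I ^ (k + 1)) m) := by
  rw [← homPowDiagram_restrictionMap I k.zero_le, Module.DirectLimit.of_f]
  rfl

theorem mem_torsionGamma_iff (m : M) :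
    m ∈ torsionGamma R I M ↔ ∃ k : ℕ, m ∈ Submodule.torsionBySet R M (I ^ (k + 1) : Ideal R) := by
  refine Submodule.mem_iSup_of_directed _ (Monotone.directed_le fun k l hkl => ?_)
  exact Submodule.torsionBySet_le_torsionBySet_pow _ _ (by omega) I

theorem ker_toTransform : LinearMap.ker (toTransform R I M) = torsionGamma R I M := by
  ext m
  simp only [mem_torsionGamma_iff, ← ker_restrictionMap, LinearMap.mem_ker]
  constructor
  · intro hm
    rw [toTransform_eq_of I 0] at hm
    obtain ⟨k, _, hres⟩ := Module.DirectLimit.of.zero_exact hm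
    exact ⟨k, hres⟩
  · rintro ⟨k, hk⟩
    rw [toTransform_eq_of I k, hk, map_zero]

theorem toTransform_surjective_of_baer (hM : Module.Baer R M) :
    Function.Surjective (toTransform R I M) := by
  intro z
  obtain ⟨k, f, rfl⟩ := Module.DirectLimit.exists_of z
  obtain ⟨m, rfl⟩ := restrictionMap_surjective_of_baer hM (I ^ (k + 1)) f
  exact ⟨m, toTransform_eq_of I k m⟩

end Transform

theorem stmt5 (R : Type u) [CommRing R] (I : Ideal R) (M : Type u) [AddCommGroup M]
    [Module R M] (hinj : Module.Injective R M) :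
    Function.Surjective (toTransform R I M) ∧
      LinearMap.ker (toTransform R I M) = torsionGamma R I M :=
  ⟨toTransform_surjective_of_baer I (Module.Baer.of_injective hinj), ker_toTransform I⟩
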